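/- Let Ω, Ω_1, …, Ω_n (n ≥ 2) be nonempty closed convex subsets of ℝ^m, let F ⊆ ℝ^m be a closed, bounded, convex set with 0 in its interior, and let T(x) := Σ_{i=1}^n T^F_{Ω_i}(x). Assume the solution set S := {x ∈ Ω : T(x) = inf_{y∈Ω} T(y)} is nonempty. Let α_k > 0 satisfy Σ_{k=1}^∞ α_k = ∞ and Σ_{k=1}^∞ α_k² < ∞, let x_1 ∈ Ω, and define x_{k+1} := P(x_k − α_k Σ_{i=1}^n q_{ik}; Ω), where for each i and k: q_{ik} is any element of (−∂ρ_F(ω_{ik} − x_k)) ∩ N(ω_{ik};Ω_i) for some ω_{ik} ∈ Π^F_{Ω_i}(x_k) if x_k ∉ Ω_i, and q_{ik} := 0 if x_k ∈ Ω_i. Then: (1) the sequence {x_k} converges to an optimal solution of the problem minimize T over Ω; (2) the values V_k := min{T(x_j) : j = 1, …, k} converge to the optimal value V̂ := inf_{x∈Ω} T(x); and (3) for every L ≥ 0 such that T is L-Lipschitz on ℝ^m, one has V_k − V̂ ≤ (d(x_1;S)² + L² Σ_{i=1}^k α_i²)/(2 Σ_{i=1}^k α_i) for all k. -/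

import Mathlib

/-!
Each `minTime F Ωᵢ` is Lipschitz, and `qᵢₖ` is a subgradient of it at `xₖ`: since
`minTime F Ωᵢ y ≤ gauge F (u - y)` for all `u ∈ Ωᵢ`, an element of `-∂ρ_F(ω - x) ∩ N(ω; Ωᵢ)`
supports `minTime F Ωᵢ` at `x`. So `∑ᵢ qᵢₖ ∈ ∂T(xₖ)` has norm at most any Lipschitz constant
`L` of `T`, and as the projection onto `Ω` moves no point farther from `Ω`, every `s ∈ Ω`
satisfies the basic inequality
`‖xₖ₊₁ - s‖² ≤ ‖xₖ - s‖² - 2 αₖ (T xₖ - T s) + αₖ² L²`.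
Summing it gives the error estimate, hence the convergence of the record values. For a
minimizer `s`, the distances `‖xₖ - s‖` converge (quasi-Fejér monotonicity) and
`∑ αₖ (T xₖ - T s) < ∞`; with `∑ αₖ = ∞` this yields a bounded subsequence along which
`T xₖ → min T`, whose limit `x̄` is a minimizer. Then `‖xₖ - x̄‖` converges and tends to `0`
along a subsequence, so `xₖ → x̄`.
-/
open Set Metric Bornology Pointwise Filter Topology
open scoped RealInnerProductSpace

/-- The minimal time function `T^F_Q(x) = inf {t ≥ 0 : Q ∩ (x + tF) ≠ ∅}`. -/
noncomputable def minTime {X : Type*} [NormedAddCommGroup X] [NormedSpace ℝ X]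
    (F Q : Set X) (x : X) : ℝ :=
  sInf {t : ℝ | 0 ≤ t ∧ (Q ∩ ({x} + t • F)).Nonempty}

/-- The normal cone of convex analysis to a convex set `C` at `x̄ ∈ C`. -/
def convexNormalCone {X : Type*} [NormedAddCommGroup X] [InnerProductSpace ℝ X]
    (C : Set X) (xbar : X) : Set X :=
  {v | ∀ x ∈ C, ⟪v, x - xbar⟫ ≤ 0}

/-- The subdifferential of convex analysis of `φ` at `x̄`. -/
def convexSubdiff {X : Type*} [NormedAddCommGroup X] [InnerProductSpace ℝ X]
    (φ : X → ℝ) (xbar : X) : Set X :=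
  {v | ∀ x, ⟪v, x - xbar⟫ ≤ φ x - φ xbar}

lemma mem_singleton_add_iff_sub_mem {G : Type*} [AddCommGroup G] {A : Set G} {x u : G} :
    u ∈ {x} + A ↔ u - x ∈ A := by
  simp [singleton_add, sub_eq_neg_add]

lemma LipschitzWith.finset_sum {α ι E : Type*} [PseudoEMetricSpace α] [SeminormedAddCommGroup E]
    (s : Finset ι) {f : ι → α → E} {K : ι → NNReal} (hf : ∀ i ∈ s, LipschitzWith (K i) (f i)) :
    LipschitzWith (∑ i ∈ s, K i) fun x => ∑ i ∈ s, f i x := by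
  classical
  induction s using Finset.induction_on with
  | empty => simpa using LipschitzWith.const (0 : E)
  | insert i s hi ih =>
    simp only [Finset.sum_insert hi]
    exact (hf i (Finset.mem_insert_self i s)).add
      (ih fun j hj => hf j (Finset.mem_insert_of_mem hj))

lemma isClosed_setOf_isMinOn {E : Type*} [TopologicalSpace E] {Ω : Set E} {f : E → ℝ}
    (hΩ : IsClosed Ω) (hf : Continuous f) : IsClosed {z ∈ Ω | IsMinOn f Ω z} := by
  have hinter : {z ∈ Ω | IsMinOn f Ω z} = Ω ∩ ⋂ y ∈ Ω, {z | f z ≤ f y} := by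
    ext z
    simp [isMinOn_iff]
  rw [hinter]
  exact hΩ.inter (isClosed_biInter fun y _ => isClosed_le hf continuous_const)

section MinTime

variable {X : Type*} [NormedAddCommGroup X] [NormedSpace ℝ X] {F Q : Set X} {x y u : X}

lemma minTime_nonneg (F Q : Set X) (x : X) : 0 ≤ minTime F Q x :=
  Real.sInf_nonneg fun _ ht => ht.1

lemma minTime_le {t : ℝ} (ht : 0 ≤ t) (hu : u ∈ Q) (hut : u - x ∈ t • F) : minTime F Q x ≤ t :=
  csInf_le ⟨0, fun _ hs => hs.1⟩ ⟨ht, u, hu, mem_singleton_add_iff_sub_mem.2 hut⟩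

lemma minTime_eq_zero_of_mem (hF : F.Nonempty) (hx : x ∈ Q) : minTime F Q x = 0 :=
  (minTime_le le_rfl hx (by simp [zero_smul_set hF])).antisymm (minTime_nonneg F Q x)

lemma minTime_le_gauge (hF : Convex ℝ F) (hF0 : F ∈ 𝓝 0) (hu : u ∈ Q) :
    minTime F Q x ≤ gauge F (u - x) := by
  refine le_of_forall_pos_le_add fun ε hε => ?_
  have ht : 0 < gauge F (u - x) + ε := add_pos_of_nonneg_of_pos (gauge_nonneg _) hε
  refine minTime_le ht.le hu ((mem_smul_set_iff_inv_smul_mem₀ ht.ne' _ _).2 ?_)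
  apply setOfPred_gauge_lt_one_subset_self hF (mem_of_mem_nhds hF0) (absorbent_nhds_zero hF0)
  change gauge F (_ • (u - x)) < 1
  rw [gauge_smul_of_nonneg (inv_nonneg.2 ht.le), smul_eq_mul, inv_mul_lt_one₀ ht]
  linarith

lemma exists_gauge_lt_minTime_add (hF0 : F ∈ 𝓝 0) (hQ : Q.Nonempty) {ε : ℝ} (hε : 0 < ε) :
    ∃ u ∈ Q, gauge F (u - x) < minTime F Q x + ε := by
  obtain ⟨q, hq⟩ := hQ
  obtain ⟨b, hb, -, hqb⟩ :=
    exists_lt_of_gauge_lt (absorbent_nhds_zero hF0) (lt_add_one (gauge F (q - x)))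
  have hne : {t : ℝ | 0 ≤ t ∧ (Q ∩ ({x} + t • F)).Nonempty}.Nonempty :=
    ⟨b, hb.le, q, hq, mem_singleton_add_iff_sub_mem.2 hqb⟩
  obtain ⟨t, ⟨ht, u, hu, hut⟩, hlt⟩ :=
    exists_lt_of_csInf_lt hne (lt_add_of_pos_right (minTime F Q x) hε)
  exact ⟨u, hu, (gauge_le_of_mem ht (mem_singleton_add_iff_sub_mem.1 hut)).trans_lt hlt⟩

lemma minTime_le_minTime_add_gauge (hF : Convex ℝ F) (hF0 : F ∈ 𝓝 0) (hQ : Q.Nonempty) :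
    minTime F Q x ≤ minTime F Q y + gauge F (y - x) := by
  refine le_of_forall_pos_le_add fun ε hε => ?_
  obtain ⟨u, hu, hlt⟩ := exists_gauge_lt_minTime_add (x := y) hF0 hQ hε
  calc minTime F Q x ≤ gauge F (u - x) := minTime_le_gauge hF hF0 hu
    _ ≤ gauge F (u - y) + gauge F (y - x) := by
      simpa using gauge_add_le hF (absorbent_nhds_zero hF0) (u - y) (y - x)
    _ ≤ minTime F Q y + gauge F (y - x) + ε := by linarith

lemma lipschitzWith_minTime {K : NNReal} (hF : Convex ℝ F) (hF0 : F ∈ 𝓝 0)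
    (hK : LipschitzWith K (gauge F)) (hQ : Q.Nonempty) : LipschitzWith K (minTime F Q) := by
  refine LipschitzWith.of_le_add_mul K fun x y => ?_
  have := hK.dist_le_mul (y - x) 0
  rw [Real.dist_eq, gauge_zero, sub_zero, abs_of_nonneg (gauge_nonneg _), dist_zero_right,
    ← dist_eq_norm, dist_comm] at this
  linarith [minTime_le_minTime_add_gauge (x := x) (y := y) hF hF0 hQ]

end MinTime

section Subgradient

variable {E : Type*} [NormedAddCommGroup E] [InnerProductSpace ℝ E] {φ : E → ℝ} {z g : E}

lemma sum_mem_convexSubdiff {ι : Type*} (s : Finset ι) {f : ι → E → ℝ} {v : ι → E}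
    (hv : ∀ i ∈ s, v i ∈ convexSubdiff (f i) z) :
    ∑ i ∈ s, v i ∈ convexSubdiff (fun y => ∑ i ∈ s, f i y) z := fun y => by
  rw [sum_inner, ← Finset.sum_sub_distrib]
  exact Finset.sum_le_sum fun i hi => hv i hi y

lemma norm_le_of_mem_convexSubdiff {L : ℝ} (hL : 0 ≤ L)
    (hφ : ∀ u w, |φ u - φ w| ≤ L * ‖u - w‖) (hg : g ∈ convexSubdiff φ z) : ‖g‖ ≤ L := by
  have h := (hg (z + g)).trans ((le_abs_self _).trans (hφ (z + g) z))
  rw [add_sub_cancel_left, real_inner_self_eq_norm_sq, sq] at h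
  rcases (norm_nonneg g).eq_or_lt with h0 | h0
  · exact h0 ▸ hL
  · exact le_of_mul_le_mul_right h h0

lemma zero_mem_convexSubdiff_minTime {F Q : Set E} (hF : F.Nonempty) (hz : z ∈ Q) :
    (0 : E) ∈ convexSubdiff (minTime F Q) z := fun y => by
  simpa [minTime_eq_zero_of_mem hF hz] using minTime_nonneg F Q y

lemma mem_convexSubdiff_minTime_of_normalCone {F Q : Set E} (hF : Convex ℝ F) (hF0 : F ∈ 𝓝 0)
    (hQ : Q.Nonempty) {ω : E} (hω : ω ∈ Q) (hg : -g ∈ convexSubdiff (gauge F) (ω - z))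
    (hgQ : g ∈ convexNormalCone Q ω) : g ∈ convexSubdiff (minTime F Q) z := fun y => by
  refine le_of_forall_pos_le_add fun ε hε => ?_
  obtain ⟨u, hu, hlt⟩ := exists_gauge_lt_minTime_add (x := y) hF0 hQ hε
  have hdecomp : ⟪g, y - z⟫ = ⟪-g, (u - y) - (ω - z)⟫ + ⟪g, u - ω⟫ := by
    rw [inner_neg_left, ← sub_eq_neg_add, ← inner_sub_right]
    congr 1
    abel
  linarith [hg (u - y), hgQ u hu, minTime_le_gauge (x := z) hF hF0 hω]

end Subgradient

def SubgradientBasicIneq {E : Type*} [NormedAddCommGroup E] (f : E → ℝ) (α : ℕ → ℝ) (L : ℝ)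
    (x : ℕ → E) (s : E) : Prop :=
  ∀ k, ‖x (k + 1) - s‖ ^ 2 ≤ ‖x k - s‖ ^ 2 - 2 * α k * (f (x k) - f s) + α k ^ 2 * L ^ 2

section ProjectedSubgradient

variable {E : Type*} [NormedAddCommGroup E] [InnerProductSpace ℝ E] {Ω : Set E} {f : E → ℝ}

lemma norm_sub_le_of_norm_sub_eq_infDist (hΩ : Convex ℝ Ω) {y p s : E} (hp : p ∈ Ω)
    (hyp : ‖y - p‖ = infDist y Ω) (hs : s ∈ Ω) : ‖p - s‖ ≤ ‖y - s‖ := by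
  rw [infDist_eq_iInf] at hyp
  simp_rw [dist_eq_norm] at hyp
  have hobtuse : ⟪y - p, s - p⟫ ≤ 0 := (norm_eq_iInf_iff_real_inner_le_zero hΩ hp).1 hyp s hs
  have hexpand : ‖y - s‖ ^ 2 = ‖y - p‖ ^ 2 - 2 * ⟪y - p, s - p⟫ + ‖p - s‖ ^ 2 := by
    rw [show y - s = (y - p) - (s - p) by abel, norm_sub_sq_real, norm_sub_rev s p]
  nlinarith [norm_nonneg (p - s), norm_nonneg (y - s), sq_nonneg ‖y - p‖]

lemma sq_norm_sub_smul_sub_le {z g : E} {a : ℝ} (ha : 0 ≤ a) (hg : g ∈ convexSubdiff f z)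
    (s : E) : ‖z - a • g - s‖ ^ 2 ≤ ‖z - s‖ ^ 2 - 2 * a * (f z - f s) + a ^ 2 * ‖g‖ ^ 2 := by
  have hexpand : ‖z - a • g - s‖ ^ 2 = ‖z - s‖ ^ 2 - 2 * a * ⟪g, z - s⟫ + a ^ 2 * ‖g‖ ^ 2 := by
    rw [show z - a • g - s = (z - s) - a • g by abel, norm_sub_sq_real, real_inner_smul_right,
      norm_smul, mul_pow, Real.norm_eq_abs, sq_abs, real_inner_comm]
    ring
  have hsubgrad : f z - f s ≤ ⟪g, z - s⟫ := by
    have := hg s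
    rw [← neg_sub z s, inner_neg_right] at this
    linarith
  rw [hexpand]
  nlinarith

lemma subgradientBasicIneq_of_projection (hΩ : Convex ℝ Ω) {α : ℕ → ℝ} {L : ℝ} {x g : ℕ → E}
    (hproj : ∀ k, x (k + 1) ∈ Ω ∧
      ‖(x k - α k • g k) - x (k + 1)‖ = infDist (x k - α k • g k) Ω)
    (hα : ∀ k, 0 ≤ α k) (hg : ∀ k, g k ∈ convexSubdiff f (x k)) (hgL : ∀ k, ‖g k‖ ≤ L)
    {s : E} (hs : s ∈ Ω) : SubgradientBasicIneq f α L x s := fun k => by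
  have hnonexp := norm_sub_le_of_norm_sub_eq_infDist hΩ (hproj k).1 (hproj k).2 hs
  have hgL2 : ‖g k‖ ^ 2 ≤ L ^ 2 := pow_le_pow_left₀ (norm_nonneg _) (hgL k) 2
  calc ‖x (k + 1) - s‖ ^ 2 ≤ ‖x k - α k • g k - s‖ ^ 2 :=
        pow_le_pow_left₀ (norm_nonneg _) hnonexp 2
    _ ≤ ‖x k - s‖ ^ 2 - 2 * α k * (f (x k) - f s) + α k ^ 2 * ‖g k‖ ^ 2 :=
        sq_norm_sub_smul_sub_le (hα k) (hg k) s
    _ ≤ _ := by gcongr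

end ProjectedSubgradient

lemma exists_tendsto_of_le_add_of_summable {a c : ℕ → ℝ} (ha : BddBelow (range a))
    (hc : Summable c) (h : ∀ k, a (k + 1) ≤ a k + c k) : ∃ l, Tendsto a atTop (𝓝 l) := by
  set b : ℕ → ℝ := fun k => a k - ∑ i ∈ Finset.range k, c i
  have hb : Antitone b := antitone_nat_of_succ_le fun k => by
    simp only [b, Finset.sum_range_succ]
    linarith [h k]
  obtain ⟨A, hA⟩ := ha
  obtain ⟨C, hC⟩ := hc.tendsto_sum_tsum_nat.bddAbove_range
  have hbb : BddBelow (range b) := ⟨A - C, by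
    rintro _ ⟨k, rfl⟩
    linarith [hA ⟨k, rfl⟩, hC ⟨k, rfl⟩]⟩
  exact ⟨_, by simpa [b] using (tendsto_atTop_ciInf hb hbb).add hc.tendsto_sum_tsum_nat⟩

lemma frequently_lt_of_sum_mul_le {α δ : ℕ → ℝ} (hα : ∀ k, 0 ≤ α k)
    (hdiv : Tendsto (fun N => ∑ k ∈ Finset.range N, α k) atTop atTop) {B : ℝ}
    (hB : ∀ K, ∑ k ∈ Finset.range K, α k * δ k ≤ B) {ε : ℝ} (hε : 0 < ε) :
    ∃ᶠ k in atTop, δ k < ε := by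
  by_contra hfreq
  obtain ⟨N, hN⟩ := eventually_atTop.1 (not_frequently.1 hfreq)
  set C := ∑ k ∈ Finset.range N, α k * (δ k - ε)
  have hlower : ∀ K ≥ N, ε * ∑ k ∈ Finset.range K, α k + C ≤ ∑ k ∈ Finset.range K, α k * δ k := by
    intro K hK
    have htail : 0 ≤ ∑ k ∈ Finset.Ico N K, α k * (δ k - ε) :=
      Finset.sum_nonneg fun k hk =>
        mul_nonneg (hα k) (sub_nonneg.2 (not_lt.1 (hN k (Finset.mem_Ico.1 hk).1)))
    have hsplit := Finset.sum_range_add_sum_Ico (fun k => α k * (δ k - ε)) hK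
    simp only [C, mul_sub, Finset.sum_sub_distrib, ← Finset.sum_mul] at hsplit htail ⊢
    linarith
  have hgrow := tendsto_atTop_add_const_right _ C (hdiv.const_mul_atTop hε)
  obtain ⟨K, hKB, hKN⟩ := ((hgrow.eventually_gt_atTop B).and (eventually_ge_atTop N)).exists
  linarith [hlower K hKN, hB K]

lemma tendsto_of_tendsto_norm_sub_of_subseq {E : Type*} [SeminormedAddCommGroup E] {x : ℕ → E}
    {a : E} {l : ℝ} (hl : Tendsto (fun k => ‖x k - a‖) atTop (𝓝 l)) {φ : ℕ → ℕ}
    (hφ : StrictMono φ) (hxφ : Tendsto (x ∘ φ) atTop (𝓝 a)) : Tendsto x atTop (𝓝 a) := by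
  have hl0 : l = 0 :=
    tendsto_nhds_unique (hl.comp hφ.tendsto_atTop) (tendsto_iff_norm_sub_tendsto_zero.1 hxφ)
  exact tendsto_iff_norm_sub_tendsto_zero.2 (hl0 ▸ hl)

namespace SubgradientBasicIneq

variable {E : Type*} [NormedAddCommGroup E] {f : E → ℝ} {α : ℕ → ℝ}
  {L : ℝ} {x : ℕ → E} {s : E}

lemma two_mul_sum_add_sq_le (h : SubgradientBasicIneq f α L x s) (K : ℕ) :
    2 * ∑ k ∈ Finset.range K, α k * (f (x k) - f s) + ‖x K - s‖ ^ 2 ≤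
      ‖x 0 - s‖ ^ 2 + L ^ 2 * ∑ k ∈ Finset.range K, α k ^ 2 := by
  induction K with
  | zero => simp
  | succ K ih =>
    simp only [Finset.sum_range_succ]
    linarith [h K]

lemma iInf_sub_le (h : SubgradientBasicIneq f α L x s) (hα : ∀ k, 0 < α k) (k : ℕ) :
    (⨅ j : Fin (k + 1), f (x j)) - f s ≤
      (‖x 0 - s‖ ^ 2 + L ^ 2 * ∑ i ∈ Finset.range (k + 1), α i ^ 2) /
        (2 * ∑ i ∈ Finset.range (k + 1), α i) := by
  have hA : 0 < ∑ i ∈ Finset.range (k + 1), α i := Finset.sum_pos (fun i _ => hα i) (by simp)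
  rw [le_div_iff₀ (by positivity)]
  have hrecord : ∀ j ∈ Finset.range (k + 1),
      α j * ((⨅ j : Fin (k + 1), f (x j)) - f s) ≤ α j * (f (x j) - f s) := fun j hj => by
    gcongr
    · exact (hα j).le
    · exact ciInf_le (Finite.bddBelow_range _) (⟨j, Finset.mem_range.1 hj⟩ : Fin (k + 1))
  have hsum := Finset.sum_le_sum hrecord
  rw [← Finset.sum_mul] at hsum
  nlinarith [h.two_mul_sum_add_sq_le (k + 1), sq_nonneg ‖x (k + 1) - s‖]

lemma tendsto_iInf (h : SubgradientBasicIneq f α L x s) (hα : ∀ k, 0 < α k)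
    (hdiv : Tendsto (fun N => ∑ k ∈ Finset.range N, α k) atTop atTop)
    (hsq : Summable fun k => α k ^ 2) (hfs : ∀ k, f s ≤ f (x k)) :
    Tendsto (fun k => ⨅ j : Fin (k + 1), f (x j)) atTop (𝓝 (f s)) := by
  set C := ‖x 0 - s‖ ^ 2 + L ^ 2 * ∑' k, α k ^ 2
  have hupper : ∀ k, (⨅ j : Fin (k + 1), f (x j)) ≤
      f s + C / (2 * ∑ i ∈ Finset.range (k + 1), α i) := fun k => by
    have hA : 0 < ∑ i ∈ Finset.range (k + 1), α i := Finset.sum_pos (fun i _ => hα i) (by simp)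
    have hC : ‖x 0 - s‖ ^ 2 + L ^ 2 * ∑ i ∈ Finset.range (k + 1), α i ^ 2 ≤
        ‖x 0 - s‖ ^ 2 + L ^ 2 * ∑' k, α k ^ 2 := by
      gcongr
      exact hsq.sum_le_tsum _ fun i _ => sq_nonneg _
    have := div_le_div_of_nonneg_right hC (by positivity : 0 ≤ 2 * ∑ i ∈ Finset.range (k + 1), α i)
    linarith [h.iInf_sub_le hα k]
  have hrate : Tendsto (fun k => f s + C / (2 * ∑ i ∈ Finset.range (k + 1), α i)) atTop
      (𝓝 (f s)) := by
    simpa using tendsto_const_nhds.add <| tendsto_const_nhds.div_atTop <|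
      (hdiv.comp (tendsto_add_atTop_nat 1)).const_mul_atTop two_pos
  exact tendsto_of_tendsto_of_tendsto_of_le_of_le tendsto_const_nhds hrate
    (fun k => le_ciInf fun j => hfs j) hupper

lemma exists_tendsto_norm_sub (h : SubgradientBasicIneq f α L x s) (hsq : Summable fun k => α k ^ 2)
    (hα : ∀ k, 0 ≤ α k) (hfs : ∀ k, f s ≤ f (x k)) :
    ∃ l, Tendsto (fun k => ‖x k - s‖) atTop (𝓝 l) := by
  obtain ⟨l, hl⟩ := exists_tendsto_of_le_add_of_summable (a := fun k => ‖x k - s‖ ^ 2)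
    ⟨0, by rintro _ ⟨k, rfl⟩; positivity⟩ (hsq.mul_right (L ^ 2)) fun k => by
      nlinarith [h k, mul_nonneg (hα k) (sub_nonneg.2 (hfs k))]
  refine ⟨√l, ?_⟩
  simpa [Function.comp_def, Real.sqrt_sq (norm_nonneg _)] using
    (Real.continuous_sqrt.tendsto l).comp hl

variable [ProperSpace E] {Ω : Set E}

lemma exists_subseq_tendsto_isMinOn (h : SubgradientBasicIneq f α L x s) (hΩ : IsClosed Ω)
    (hf : Continuous f) (hx : ∀ k, x k ∈ Ω) (hα : ∀ k, 0 ≤ α k)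
    (hdiv : Tendsto (fun N => ∑ k ∈ Finset.range N, α k) atTop atTop)
    (hsq : Summable fun k => α k ^ 2) (hmin : IsMinOn f Ω s) :
    ∃ xbar ∈ Ω, IsMinOn f Ω xbar ∧
      ∃ φ : ℕ → ℕ, StrictMono φ ∧ Tendsto (x ∘ φ) atTop (𝓝 xbar) := by
  have hfs : ∀ k, f s ≤ f (x k) := fun k => hmin (hx k)
  set C := ‖x 0 - s‖ ^ 2 + L ^ 2 * ∑' k, α k ^ 2 with hC
  have hsum : ∀ K, 2 * ∑ k ∈ Finset.range K, α k * (f (x k) - f s) + ‖x K - s‖ ^ 2 ≤ C :=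
    fun K => (h.two_mul_sum_add_sq_le K).trans <| by
      rw [hC]
      gcongr
      exact hsq.sum_le_tsum _ fun i _ => sq_nonneg _
  have hweighted : ∀ K, 0 ≤ ∑ k ∈ Finset.range K, α k * (f (x k) - f s) := fun K =>
    Finset.sum_nonneg fun k _ => mul_nonneg (hα k) (sub_nonneg.2 (hfs k))
  have hsmall : ∀ n : ℕ, ∃ᶠ k in atTop, f (x k) - f s < 1 / ((n : ℝ) + 1) := fun n =>
    frequently_lt_of_sum_mul_le hα hdiv (B := C / 2)
      (fun K => by linarith [hsum K, sq_nonneg ‖x K - s‖]) (by positivity)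
  obtain ⟨φ, hφ, hφsmall⟩ := extraction_forall_of_frequently hsmall
  have hbdd : ∀ k, x k ∈ closedBall s √C := fun k => by
    rw [mem_closedBall, dist_eq_norm, ← abs_norm]
    exact Real.abs_le_sqrt (by linarith [hsum k, hweighted k])
  obtain ⟨xbar, -, ψ, hψ, hlim⟩ :=
    tendsto_subseq_of_bounded isBounded_closedBall fun j => hbdd (φ j)
  have hxbar : xbar ∈ Ω := hΩ.mem_of_tendsto hlim (Eventually.of_forall fun j => hx _)
  have hfφψ : Tendsto (fun j => f (x (φ (ψ j)))) atTop (𝓝 (f s)) := by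
    refine tendsto_of_tendsto_of_tendsto_of_le_of_le tendsto_const_nhds ?_ (fun j => hfs _)
      fun j => (sub_lt_iff_lt_add'.1 (hφsmall (ψ j))).le
    simpa using (tendsto_const_nhds (x := f s)).add
      (tendsto_one_div_add_atTop_nhds_zero_nat.comp hψ.tendsto_atTop)
  have hfxbar : f xbar = f s := tendsto_nhds_unique ((hf.tendsto xbar).comp hlim) hfφψ
  exact ⟨xbar, hxbar, fun y hy => hfxbar ▸ hmin hy, φ ∘ ψ, hφ.comp hψ, hlim⟩

end SubgradientBasicIneq

theorem exists_tendsto_isMinOn_of_subgradientBasicIneq {E : Type*} [NormedAddCommGroup E]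
    [ProperSpace E] {Ω : Set E} {f : E → ℝ} {α : ℕ → ℝ} {L : ℝ} {x : ℕ → E}
    (hbasic : ∀ s ∈ Ω, SubgradientBasicIneq f α L x s) (hΩ : IsClosed Ω) (hf : Continuous f)
    (hx : ∀ k, x k ∈ Ω) (hα : ∀ k, 0 ≤ α k)
    (hdiv : Tendsto (fun N => ∑ k ∈ Finset.range N, α k) atTop atTop)
    (hsq : Summable fun k => α k ^ 2) {s : E} (hs : s ∈ Ω) (hmin : IsMinOn f Ω s) :
    ∃ xbar ∈ Ω, IsMinOn f Ω xbar ∧ Tendsto x atTop (𝓝 xbar) := by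
  obtain ⟨xbar, hxbar, hxbarmin, φ, hφ, hlim⟩ :=
    (hbasic s hs).exists_subseq_tendsto_isMinOn hΩ hf hx hα hdiv hsq hmin
  obtain ⟨l, hl⟩ :=
    (hbasic xbar hxbar).exists_tendsto_norm_sub hsq hα fun k => hxbarmin (hx k)
  exact ⟨xbar, hxbar, hxbarmin, tendsto_of_tendsto_norm_sub_of_subseq hl hφ hlim⟩

theorem heron_subgradient_algorithm_general
    (m n : ℕ)
    (Ω : Set (EuclideanSpace ℝ (Fin m))) (hΩc : IsClosed Ω)
    (hΩconv : Convex ℝ Ω)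
    (Ωi : Fin n → Set (EuclideanSpace ℝ (Fin m))) (hΩine : ∀ i, (Ωi i).Nonempty)
    (F : Set (EuclideanSpace ℝ (Fin m)))
    (hFconv : Convex ℝ F) (hF0 : (0 : EuclideanSpace ℝ (Fin m)) ∈ interior F)
    (T : EuclideanSpace ℝ (Fin m) → ℝ) (hT : T = fun x => ∑ i, minTime F (Ωi i) x)
    (S : Set (EuclideanSpace ℝ (Fin m))) (hS : S = {x ∈ Ω | ∀ y ∈ Ω, T x ≤ T y})
    (hSne : S.Nonempty)
    (α : ℕ → ℝ) (hα : ∀ k, 0 < α k)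
    (hdiv : Tendsto (fun N => ∑ k ∈ Finset.range N, α k) atTop atTop)
    (hsq : Summable fun k => (α k) ^ 2)
    (x : ℕ → EuclideanSpace ℝ (Fin m)) (hx0 : x 0 ∈ Ω)
    (q : Fin n → ℕ → EuclideanSpace ℝ (Fin m))
    (hq0 : ∀ i k, x k ∈ Ωi i → q i k = 0)
    (hq : ∀ i k, x k ∉ Ωi i →
      ∃ ω ∈ Ωi i ∩ ({x k} + minTime F (Ωi i) (x k) • F),
        q i k ∈ (-(convexSubdiff (gauge F) (ω - x k))) ∩ convexNormalCone (Ωi i) ω)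
    (hiter : ∀ k, x (k + 1) ∈ Ω ∧
      ‖(x k - α k • ∑ i, q i k) - x (k + 1)‖ =
        infDist (x k - α k • ∑ i, q i k) Ω)
    (V : ℕ → ℝ) (hV : ∀ k, V k = ⨅ j : Fin (k + 1), T (x j)) :
    (∃ xbar ∈ S, Tendsto x atTop (nhds xbar)) ∧
    Tendsto V atTop (nhds (sInf (T '' Ω))) ∧
    (∀ L : ℝ, 0 ≤ L → (∀ u w : EuclideanSpace ℝ (Fin m), |T u - T w| ≤ L * ‖u - w‖) →
      ∀ k, V k - sInf (T '' Ω) ≤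
        (infDist (x 0) S ^ 2 + L ^ 2 * ∑ i ∈ Finset.range (k + 1), α i ^ 2) /
          (2 * ∑ i ∈ Finset.range (k + 1), α i)) := by
  replace hF0 : F ∈ 𝓝 0 := mem_interior_iff_mem_nhds.1 hF0
  obtain ⟨K, hK⟩ := hFconv.lipschitz_gauge hF0
  have hTlip : LipschitzWith (∑ _ : Fin n, K) T :=
    hT ▸ LipschitzWith.finset_sum _ fun i _ => lipschitzWith_minTime hFconv hF0 hK (hΩine i)
  have hsub : ∀ k, ∑ i, q i k ∈ convexSubdiff T (x k) := fun k =>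
    hT ▸ sum_mem_convexSubdiff _ fun i _ => by
      by_cases hxi : x k ∈ Ωi i
      · exact hq0 i k hxi ▸ zero_mem_convexSubdiff_minTime ⟨0, mem_of_mem_nhds hF0⟩ hxi
      · obtain ⟨ω, hω, hqi, hqN⟩ := hq i k hxi
        exact mem_convexSubdiff_minTime_of_normalCone hFconv hF0 (hΩine i) hω.1 hqi hqN
  have hbasic : ∀ L, 0 ≤ L → (∀ u w, |T u - T w| ≤ L * ‖u - w‖) →
      ∀ s ∈ Ω, SubgradientBasicIneq T α L x s := fun L hL hTL _ hs =>
    subgradientBasicIneq_of_projection hΩconv hiter (fun k => (hα k).le) hsub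
      (fun k => norm_le_of_mem_convexSubdiff hL hTL (hsub k)) hs
  have hTabs : ∀ u w, |T u - T w| ≤ ↑(∑ _ : Fin n, K) * ‖u - w‖ := fun u w => by
    simpa [Real.dist_eq, dist_eq_norm] using hTlip.dist_le_mul u w
  have hx : ∀ k, x k ∈ Ω := fun k => k.casesOn hx0 fun k => (hiter k).1
  change S = {z ∈ Ω | IsMinOn T Ω z} at hS
  subst hS
  obtain ⟨s, hsΩ, hsmin⟩ := hSne
  have hTs : ∀ s' ∈ {z ∈ Ω | IsMinOn T Ω z}, sInf (T '' Ω) = T s' := fun s' hs' => by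
    rw [sInf_image', hs'.2.iInf_eq hs'.1]
  refine ⟨?_, ?_, fun L hL hTL k => ?_⟩
  · obtain ⟨xbar, hxbar, hxbarmin, hlim⟩ := exists_tendsto_isMinOn_of_subgradientBasicIneq
      (hbasic _ (NNReal.coe_nonneg _) hTabs) hΩc hTlip.continuous hx (fun k => (hα k).le) hdiv hsq
      hsΩ hsmin
    exact ⟨xbar, ⟨hxbar, hxbarmin⟩, hlim⟩
  · rw [funext hV, hTs s ⟨hsΩ, hsmin⟩]
    exact (hbasic _ (NNReal.coe_nonneg _) hTabs s hsΩ).tendsto_iInf hα hdiv hsq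
      fun k => hsmin (hx k)
  · obtain ⟨s', hs', hdist⟩ :=
      (isClosed_setOf_isMinOn hΩc hTlip.continuous).exists_infDist_eq_dist ⟨s, hsΩ, hsmin⟩ (x 0)
    rw [hV, hdist, dist_eq_norm, hTs s' hs']
    exact (hbasic L hL hTL s' hs'.1).iInf_sub_le hα k

/-- The subgradient algorithm for the generalized Heron problem in `ℝ^m`:
convergence of the iterates to an optimal solution, convergence of the record
values to the optimal value, and the standard a priori error estimate. -/
theorem heron_subgradient_algorithm
    (m n : ℕ) (hn : 2 ≤ n)
    (Ω : Set (EuclideanSpace ℝ (Fin m))) (hΩne : Ω.Nonempty) (hΩc : IsClosed Ω)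
    (hΩconv : Convex ℝ Ω)
    (Ωi : Fin n → Set (EuclideanSpace ℝ (Fin m))) (hΩine : ∀ i, (Ωi i).Nonempty)
    (hΩic : ∀ i, IsClosed (Ωi i)) (hΩiconv : ∀ i, Convex ℝ (Ωi i))
    (F : Set (EuclideanSpace ℝ (Fin m))) (hFc : IsClosed F) (hFb : IsBounded F)
    (hFconv : Convex ℝ F) (hF0 : (0 : EuclideanSpace ℝ (Fin m)) ∈ interior F)
    (T : EuclideanSpace ℝ (Fin m) → ℝ) (hT : T = fun x => ∑ i, minTime F (Ωi i) x)
    (S : Set (EuclideanSpace ℝ (Fin m))) (hS : S = {x ∈ Ω | ∀ y ∈ Ω, T x ≤ T y})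
    (hSne : S.Nonempty)
    (α : ℕ → ℝ) (hα : ∀ k, 0 < α k)
    (hdiv : Tendsto (fun N => ∑ k ∈ Finset.range N, α k) atTop atTop)
    (hsq : Summable fun k => (α k) ^ 2)
    (x : ℕ → EuclideanSpace ℝ (Fin m)) (hx0 : x 0 ∈ Ω)
    (q : Fin n → ℕ → EuclideanSpace ℝ (Fin m))
    (hq0 : ∀ i k, x k ∈ Ωi i → q i k = 0)
    (hq : ∀ i k, x k ∉ Ωi i →
      ∃ ω ∈ Ωi i ∩ ({x k} + minTime F (Ωi i) (x k) • F),
        q i k ∈ (-(convexSubdiff (gauge F) (ω - x k))) ∩ convexNormalCone (Ωi i) ω)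
    (hiter : ∀ k, x (k + 1) ∈ Ω ∧
      ‖(x k - α k • ∑ i, q i k) - x (k + 1)‖ =
        infDist (x k - α k • ∑ i, q i k) Ω)
    (V : ℕ → ℝ) (hV : ∀ k, V k = ⨅ j : Fin (k + 1), T (x j)) :
    (∃ xbar ∈ S, Tendsto x atTop (nhds xbar)) ∧
    Tendsto V atTop (nhds (sInf (T '' Ω))) ∧
    (∀ L : ℝ, 0 ≤ L → (∀ u w : EuclideanSpace ℝ (Fin m), |T u - T w| ≤ L * ‖u - w‖) →
      ∀ k, V k - sInf (T '' Ω) ≤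
        (infDist (x 0) S ^ 2 + L ^ 2 * ∑ i ∈ Finset.range (k + 1), α i ^ 2) /
          (2 * ∑ i ∈ Finset.range (k + 1), α i)) :=
  heron_subgradient_algorithm_general m n Ω hΩc hΩconv Ωi hΩine F hFconv hF0 T hT S hS hSne α hα
    hdiv hsq x hx0 q hq0 hq hiter V hV
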